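/- arXiv:2106.05828 — 5 statements merged into one kernel-verified Lean document; each statement's English description precedes it below -/
import Mathlib

section
/- Let y ∈ ℝ, q > 0 and r ∈ (0, ∞). The function x ↦ |x|^r attains its minimum over the interval {x ∈ ℝ : |y − x| ≤ q} at the unique point η^soft(y, q) = sign(y)·max(|y| − q, 0); i.e., η^soft(y, q) is feasible and every feasible x ≠ η^soft(y, q) satisfies |x|^r > |η^soft(y, q)|^r. -/
/-- The soft-thresholding function `η^soft(x, q) = sign(x) · max(|x| − q, 0)`. -/
noncomputable def etaSoft (x q : ℝ) : ℝ := Real.sign x * max (|x| - q) 0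

/-- For `y ∈ ℝ`, `q > 0` and `r ∈ (0, ∞)`, the function `x ↦ |x|^r` attains its minimum over
`{x : |y − x| ≤ q}` at the unique point `η^soft(y, q)`: the latter is feasible, and every
feasible `x ≠ η^soft(y, q)` satisfies `|x|^r > |η^soft(y, q)|^r`. -/
theorem soft_thresholding_unique_min (y q r : ℝ) (hq : 0 < q) (hr : 0 < r) :
    |y - etaSoft y q| ≤ q ∧
    ∀ x : ℝ, |y - x| ≤ q → x ≠ etaSoft y q → |etaSoft y q| ^ r < |x| ^ r := by
  by_cases hyq : |y| ≤ q
  · have he : etaSoft y q = 0 := by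
      unfold etaSoft
      have : max (|y| - q) 0 = 0 := max_eq_right (by linarith)
      rw [this, mul_zero]
    rw [he]
    constructor
    · simpa using hyq
    · intro x _ hx
      have hx0 : 0 < |x| := abs_pos.mpr hx
      rw [abs_zero, Real.zero_rpow hr.ne']
      exact Real.rpow_pos_of_pos hx0 r
  · push_neg at hyq
    rcases lt_trichotomy y 0 with hy | hy | hy
    · have hay : |y| = -y := abs_of_neg hy
      have he : etaSoft y q = y + q := by
        unfold etaSoft
        rw [Real.sign_of_neg hy, hay, max_eq_left (by linarith)]
        ring
      have heneg : y + q < 0 := by rw [hay] at hyq; linarith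
      rw [he]
      constructor
      · simp [abs_of_pos hq]
      · intro x hfeas hx
        have hxle : x ≤ y + q := by
          rcases abs_le.mp hfeas with ⟨h1, h2⟩; linarith
        have hxlt : x < y + q := lt_of_le_of_ne hxle hx
        have h1 : |y + q| < |x| := by
          rw [abs_of_neg heneg, abs_of_neg (lt_trans hxlt heneg)]; linarith
        exact Real.rpow_lt_rpow (abs_nonneg _) h1 hr
    · exfalso; rw [hy, abs_zero] at hyq; linarith
    · have hay : |y| = y := abs_of_pos hy
      have he : etaSoft y q = y - q := by
        unfold etaSoft
        rw [Real.sign_of_pos hy, hay, max_eq_left (by linarith)]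
        ring
      have hepos : 0 < y - q := by rw [hay] at hyq; linarith
      rw [he]
      constructor
      · simp [abs_of_pos hq]
      · intro x hfeas hx
        have hxge : y - q ≤ x := by
          rcases abs_le.mp hfeas with ⟨h1, h2⟩; linarith
        have hxgt : y - q < x := lt_of_le_of_ne hxge (Ne.symm hx)
        have h1 : |y - q| < |x| := by
          rw [abs_of_pos hepos, abs_of_pos (lt_trans hepos hxgt)]; exact hxgt
        exact Real.rpow_lt_rpow (abs_nonneg _) h1 hr
end

section
/- Let (φ_λ)_{λ∈Λ}, with Λ finite, be an orthonormal basis of ℝ^n, let Y ∈ ℝ^n, let q_λ > 0 for each λ ∈ Λ, and let r ∈ (0, ∞). Then the soft-thresholding estimator β̂ = Σ_{λ∈Λ} η^soft(⟨φ_λ, Y⟩, q_λ) φ_λ is the unique solution of: minimize Σ_{λ∈Λ} |⟨φ_λ, β⟩|^r over β ∈ ℝ^n subject to max_{λ∈Λ} |⟨φ_λ, Y − β⟩| / q_λ ≤ 1. -/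
open scoped RealInnerProductSpace

namespace etaSoft

variable {x q b : ℝ}

theorem eq_zero_of_abs_le (h : |x| ≤ q) : etaSoft x q = 0 := by
  rw [etaSoft, max_eq_right (by linarith), mul_zero]

theorem eq_sub_of_lt (hq : 0 ≤ q) (h : q < x) : etaSoft x q = x - q := by
  rw [etaSoft, Real.sign_of_pos (by linarith), abs_of_pos (by linarith),
    max_eq_left (by linarith), one_mul]

theorem eq_add_of_lt_neg (hq : 0 ≤ q) (h : x < -q) : etaSoft x q = x + q := by
  rw [etaSoft, Real.sign_of_neg (by linarith), abs_of_neg (by linarith),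
    max_eq_left (by linarith)]
  ring

theorem abs_sub_le (hq : 0 ≤ q) : |x - etaSoft x q| ≤ q := by
  rcases le_or_gt |x| q with h | h
  · rwa [eq_zero_of_abs_le h, sub_zero]
  rcases lt_abs.mp h with h | h
  · rw [eq_sub_of_lt hq h, sub_sub_cancel, abs_of_nonneg hq]
  · rw [eq_add_of_lt_neg hq (by linarith), sub_add_cancel_left, abs_neg, abs_of_nonneg hq]

theorem abs_lt_abs_of_abs_sub_le (hb : |x - b| ≤ q) (hne : b ≠ etaSoft x q) :
    |etaSoft x q| < |b| := by
  have hq : 0 ≤ q := (abs_nonneg _).trans hb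
  obtain ⟨hb₁, hb₂⟩ := abs_le.mp hb
  rcases le_or_gt |x| q with h | h
  · rw [eq_zero_of_abs_le h] at hne ⊢
    rw [abs_zero]
    exact abs_pos.mpr hne
  rcases lt_abs.mp h with h | h
  · rw [eq_sub_of_lt hq h] at hne ⊢
    have : x - q < b := lt_of_le_of_ne (by linarith) hne.symm
    rw [abs_of_pos (by linarith), abs_of_pos (by linarith)]
    linarith
  · rw [eq_add_of_lt_neg hq (by linarith)] at hne ⊢
    have : b < x + q := lt_of_le_of_ne (by linarith) hne
    rw [abs_of_neg (by linarith), abs_of_neg (by linarith)]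
    linarith

theorem rpow_abs_le_rpow_abs_of_abs_sub_le {r : ℝ} (hr : 0 < r) (hb : |x - b| ≤ q) :
    |etaSoft x q| ^ r ≤ |b| ^ r := by
  rcases eq_or_ne b (etaSoft x q) with rfl | hne
  · rfl
  · exact (Real.rpow_lt_rpow (abs_nonneg _) (abs_lt_abs_of_abs_sub_le hb hne) hr).le

end etaSoft

/-- Variational characterization of wavelet soft-thresholding: given an orthonormal basis
`(φ_λ)_{λ∈Λ}` of `ℝ^n`, data `Y`, thresholds `q_λ > 0` and `r ∈ (0, ∞)`, the estimator
`β̂ = Σ_λ η^soft(⟨φ_λ, Y⟩, q_λ) φ_λ` is the unique solution of: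
minimize `Σ_λ |⟨φ_λ, β⟩|^r` subject to `max_λ |⟨φ_λ, Y − β⟩| / q_λ ≤ 1`. -/
theorem soft_thresholding_variational {n : ℕ} {Λ : Type*} [Fintype Λ]
    (φ : OrthonormalBasis Λ ℝ (EuclideanSpace ℝ (Fin n)))
    (Y : EuclideanSpace ℝ (Fin n)) (q : Λ → ℝ) (hq : ∀ l, 0 < q l)
    (r : ℝ) (hr : 0 < r)
    (βhat : EuclideanSpace ℝ (Fin n))
    (hβhat : βhat = ∑ l : Λ, etaSoft (inner ℝ (φ l) Y : ℝ) (q l) • φ l) :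
    (∀ l : Λ, |(inner ℝ (φ l) (Y - βhat) : ℝ)| / q l ≤ 1) ∧
    ∀ β : EuclideanSpace ℝ (Fin n),
      (∀ l : Λ, |(inner ℝ (φ l) (Y - β) : ℝ)| / q l ≤ 1) → β ≠ βhat →
      (∑ l : Λ, |(inner ℝ (φ l) βhat : ℝ)| ^ r) < ∑ l : Λ, |(inner ℝ (φ l) β : ℝ)| ^ r := by
  have hcoord (l : Λ) : ⟪φ l, βhat⟫ = etaSoft ⟪φ l, Y⟫ (q l) := by
    rw [hβhat]
    exact φ.orthonormal.inner_right_fintype _ l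
  have hfeasible (β : EuclideanSpace ℝ (Fin n)) (l : Λ) :
      |⟪φ l, Y - β⟫| / q l ≤ 1 ↔ |⟪φ l, Y⟫ - ⟪φ l, β⟫| ≤ q l := by
    rw [div_le_one (hq l), inner_sub_right]
  refine ⟨fun l => (hfeasible βhat l).mpr ?_, fun β hβ hne => ?_⟩
  · rw [hcoord l]
    exact etaSoft.abs_sub_le (hq l).le
  obtain ⟨l, hl⟩ : ∃ l, ⟪φ l, β⟫ ≠ ⟪φ l, βhat⟫ := by
    by_contra! h
    exact hne (InnerProductSpace.ext_inner_left_basis φ.toBasis h)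
  simp only [hcoord] at hl ⊢
  refine Finset.sum_lt_sum
    (fun i _ => etaSoft.rpow_abs_le_rpow_abs_of_abs_sub_le hr ((hfeasible β i).mp (hβ i)))
    ⟨l, Finset.mem_univ l, ?_⟩
  exact Real.rpow_lt_rpow (abs_nonneg _)
    (etaSoft.abs_lt_abs_of_abs_sub_le ((hfeasible β l).mp (hβ l)) hl) hr
end

section
/- Let (φ_λ)_{λ∈Λ}, with Λ finite, be an orthonormal basis of ℝ^n, let Y ∈ ℝ^n and let q_λ > 0 for each λ ∈ Λ. Then the soft-thresholding estimator β̂ = Σ_{λ∈Λ} η^soft(⟨φ_λ, Y⟩, q_λ) φ_λ is the unique solution of: minimize ‖β‖₂² over β ∈ ℝ^n subject to max_{λ∈Λ} |⟨φ_λ, Y − β⟩| / q_λ ≤ 1. -/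
/-!
In the coordinates `⟨φ_λ, ·⟩` of the orthonormal basis both the objective
`‖β‖₂² = Σ_λ ⟨φ_λ, β⟩²` and the constraint decouple, so the problem splits into the scalar
problems "minimise `t²` over `t ∈ [y - q, y + q]`". The unique solution of such a problem is the
point of the interval closest to `0`, which is `η^soft(y, q)`.
-/

open scoped RealInnerProductSpace

section Scalar

variable {q : ℝ}

theorem etaSoft_eq_max_min (hq : 0 ≤ q) (y : ℝ) :
    etaSoft y q = max (y - q) (min 0 (y + q)) := by
  rcases lt_trichotomy y 0 with hy | rfl | hy
  · rw [etaSoft, Real.sign_of_neg hy, abs_of_neg hy, max_def, max_def, min_def]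
    split_ifs <;> linarith
  · simp [etaSoft, hq]
  · rw [etaSoft, Real.sign_of_pos hy, abs_of_pos hy, max_def, max_def, min_def]
    split_ifs <;> linarith

theorem abs_sub_etaSoft_le (hq : 0 ≤ q) (y : ℝ) : |y - etaSoft y q| ≤ q := by
  rw [etaSoft_eq_max_min hq, abs_sub_le_iff]
  constructor
  · linarith [le_max_left (y - q) (min 0 (y + q))]
  · rw [max_def, min_def]; split_ifs <;> linarith

theorem sq_etaSoft_lt_sq {y t : ℝ} (hq : 0 ≤ q) (ht : |y - t| ≤ q) (hne : t ≠ etaSoft y q) :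
    etaSoft y q ^ 2 < t ^ 2 := by
  rw [etaSoft_eq_max_min hq] at hne ⊢
  rw [abs_sub_le_iff] at ht
  rcases le_or_gt (y - q) 0 with hlo | hlo
  · rcases le_or_gt 0 (y + q) with hhi | hhi
    · rw [min_eq_left hhi, max_eq_right hlo] at hne ⊢
      simpa using pow_pos (abs_pos.mpr hne) 2
    · rw [min_eq_right hhi.le, max_eq_right (by linarith)] at hne ⊢
      have : t < y + q := lt_of_le_of_ne (by linarith) hne
      nlinarith
  · rw [max_eq_left (le_trans (min_le_left _ _) hlo.le)] at hne ⊢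
    have : y - q < t := lt_of_le_of_ne (by linarith) hne.symm
    nlinarith

theorem sq_etaSoft_le_sq {y t : ℝ} (hq : 0 ≤ q) (ht : |y - t| ≤ q) :
    etaSoft y q ^ 2 ≤ t ^ 2 := by
  rcases eq_or_ne t (etaSoft y q) with rfl | hne
  · rfl
  · exact (sq_etaSoft_lt_sq hq ht hne).le

end Scalar

theorem sum_sq_etaSoft_lt_sum_sq {Λ : Type*} [Fintype Λ] {y q c : Λ → ℝ} (hq : ∀ l, 0 ≤ q l)
    (hc : ∀ l, |y l - c l| ≤ q l) (hne : c ≠ fun l => etaSoft (y l) (q l)) :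
    ∑ l, etaSoft (y l) (q l) ^ 2 < ∑ l, c l ^ 2 := by
  obtain ⟨l₀, hl₀⟩ := Function.ne_iff.mp hne
  exact Finset.sum_lt_sum (fun l _ => sq_etaSoft_le_sq (hq l) (hc l))
    ⟨l₀, Finset.mem_univ l₀, sq_etaSoft_lt_sq (hq l₀) (hc l₀) hl₀⟩

/-- Variational characterization of wavelet soft-thresholding with the squared Euclidean norm
as objective: given an orthonormal basis `(φ_λ)_{λ∈Λ}` of `ℝ^n`, data `Y` and thresholds
`q_λ > 0`, the estimator `β̂ = Σ_λ η^soft(⟨φ_λ, Y⟩, q_λ) φ_λ` is the unique solution of: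
minimize `‖β‖₂²` subject to `max_λ |⟨φ_λ, Y − β⟩| / q_λ ≤ 1`. -/
theorem soft_thresholding_variational_l2 {n : ℕ} {Λ : Type*} [Fintype Λ]
    (φ : OrthonormalBasis Λ ℝ (EuclideanSpace ℝ (Fin n)))
    (Y : EuclideanSpace ℝ (Fin n)) (q : Λ → ℝ) (hq : ∀ l, 0 < q l)
    (βhat : EuclideanSpace ℝ (Fin n))
    (hβhat : βhat = ∑ l : Λ, etaSoft (inner ℝ (φ l) Y : ℝ) (q l) • φ l) :
    (∀ l : Λ, |(inner ℝ (φ l) (Y - βhat) : ℝ)| / q l ≤ 1) ∧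
    ∀ β : EuclideanSpace ℝ (Fin n),
      (∀ l : Λ, |(inner ℝ (φ l) (Y - β) : ℝ)| / q l ≤ 1) → β ≠ βhat →
      ‖βhat‖ ^ 2 < ‖β‖ ^ 2 := by
  have inner_βhat (l : Λ) : ⟪φ l, βhat⟫ = etaSoft ⟪φ l, Y⟫ (q l) := by
    rw [hβhat]
    exact φ.orthonormal.inner_right_fintype _ l
  have feasible_iff (β : EuclideanSpace ℝ (Fin n)) (l : Λ) :
      |⟪φ l, Y - β⟫| / q l ≤ 1 ↔ |⟪φ l, Y⟫ - ⟪φ l, β⟫| ≤ q l := by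
    rw [div_le_one (hq l), inner_sub_right]
  refine ⟨fun l => (feasible_iff βhat l).2 ?_, fun β hβ hne => ?_⟩
  · rw [inner_βhat]
    exact abs_sub_etaSoft_le (hq l).le _
  · rw [← φ.sum_sq_inner_right, ← φ.sum_sq_inner_right]
    simp_rw [inner_βhat]
    refine sum_sq_etaSoft_lt_sum_sq (fun l => (hq l).le) (fun l => (feasible_iff β l).1 (hβ l)) ?_
    refine fun h => hne ?_
    rw [← φ.sum_repr' β, hβhat]
    simp_rw [congrFun h]
end

section
/- Let (φ_λ)_{λ∈Λ}, with Λ finite, be an orthonormal basis of ℝ^n, let Y ∈ ℝ^n, let q_λ > 0 for each λ ∈ Λ, and let r ∈ (0, ∞). Define the data-dependent weights w_λ = q_λ² / max{q_λ, |⟨φ_λ, Y⟩|}. Then the nonnegative garrote estimator β̂^JS = Σ_{λ∈Λ} η^JS(⟨φ_λ, Y⟩, q_λ) φ_λ is the unique solution of: minimize Σ_{λ∈Λ} |⟨φ_λ, β⟩|^r over β ∈ ℝ^n subject to max_{λ∈Λ} |⟨φ_λ, Y − β⟩| / w_λ ≤ 1. -/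
/-!
Expanding in the orthonormal basis, both the constraint and the objective separate over the
coefficients `b_λ = ⟨φ_λ, β⟩`: each `b_λ` ranges over the interval of radius
`w_λ = q_λ² / max{q_λ, |x_λ|}` around `x_λ = ⟨φ_λ, Y⟩`. If `|x_λ| ≤ q_λ` this interval is
`[x_λ - q_λ, x_λ + q_λ] ∋ 0`; otherwise `w_λ = q_λ² / |x_λ| < |x_λ|` and the point of the interval
closest to `0` is `x_λ - q_λ² / x_λ`. In both cases that point is `η^JS(x_λ, q_λ)`, the unique
minimiser of `|b_λ|`, and hence of `|b_λ|^r` for every `r > 0`.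
-/

noncomputable def etaJS (x q : ℝ) : ℝ := x * max (1 - q ^ 2 / x ^ 2) 0

lemma etaJS_neg (x q : ℝ) : etaJS (-x) q = -etaJS x q := by
  simp [etaJS]

lemma etaJS_of_abs_le {x q : ℝ} (h : |x| ≤ q) : etaJS x q = 0 := by
  rcases eq_or_ne x 0 with rfl | hx
  · simp [etaJS]
  · have hsq : x ^ 2 ≤ q ^ 2 := sq_le_sq.mpr (h.trans (le_abs_self q))
    have hle : 1 - q ^ 2 / x ^ 2 ≤ 0 := sub_nonpos.mpr ((one_le_div (by positivity)).mpr hsq)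
    simp [etaJS, max_eq_right hle]

lemma etaJS_of_lt_abs {x q : ℝ} (hq : 0 ≤ q) (h : q < |x|) : etaJS x q = x - q ^ 2 / x := by
  have hx : x ≠ 0 := abs_pos.mp (hq.trans_lt h)
  have hsq : q ^ 2 ≤ x ^ 2 := sq_le_sq.mpr ((abs_of_nonneg hq).trans_le h.le)
  have hle : 0 ≤ 1 - q ^ 2 / x ^ 2 := sub_nonneg.mpr ((div_le_one (by positivity)).mpr hsq)
  rw [etaJS, max_eq_left hle]
  field_simp

lemma abs_sub_etaJS_le {x q : ℝ} (hq : 0 < q) : |x - etaJS x q| ≤ q ^ 2 / max q |x| := by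
  rcases le_or_gt |x| q with h | h
  · rw [etaJS_of_abs_le h, sub_zero, max_eq_left h, sq, mul_div_cancel_right₀ _ hq.ne']
    exact h
  · rw [etaJS_of_lt_abs hq.le h, max_eq_right h.le, sub_sub_cancel, abs_div, abs_sq]

lemma sub_lt_abs_of_abs_sub_le {x w b : ℝ} (hb : |x - b| ≤ w) (hne : b ≠ x - w) :
    x - w < |b| := by
  have hle : x - w ≤ b := by linarith [(abs_le.mp hb).2]
  exact (lt_of_le_of_ne hle hne.symm).trans_le (le_abs_self b)

lemma abs_etaJS_lt_of_ne {x q b : ℝ} (hq : 0 < q) (hb : |x - b| ≤ q ^ 2 / max q |x|)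
    (hne : b ≠ etaJS x q) : |etaJS x q| < |b| := by
  wlog hx : 0 ≤ x generalizing x b
  · have hb' : |-x - -b| ≤ q ^ 2 / max q |-x| := by rwa [neg_sub_neg, abs_sub_comm, abs_neg]
    have hne' : -b ≠ etaJS (-x) q := by rwa [etaJS_neg, ne_eq, neg_inj]
    simpa [etaJS_neg] using this hb' hne' (by linarith)
  rw [abs_of_nonneg hx] at hb
  rcases le_or_gt x q with h | h
  · rw [etaJS_of_abs_le ((abs_of_nonneg hx).trans_le h)] at hne ⊢
    simpa using hne
  · have hx' : q < |x| := h.trans_le (le_abs_self x)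
    rw [max_eq_right h.le] at hb
    rw [etaJS_of_lt_abs hq.le hx'] at hne ⊢
    have hw : q ^ 2 / x ≤ x := by
      rw [div_le_iff₀ (hq.trans h)]
      nlinarith
    rw [abs_of_nonneg (sub_nonneg.mpr hw)]
    exact sub_lt_abs_of_abs_sub_le hb hne

lemma sum_rpow_abs_lt_of_ne {ι : Type*} [Fintype ι] {a b : ι → ℝ} {r : ℝ} (hr : 0 < r)
    (hab : ∀ i, b i ≠ a i → |a i| < |b i|) (hne : b ≠ a) :
    ∑ i, |a i| ^ r < ∑ i, |b i| ^ r := by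
  obtain ⟨i, hi⟩ := Function.ne_iff.mp hne
  refine Finset.sum_lt_sum (fun j _ => ?_) ⟨i, Finset.mem_univ i, ?_⟩
  · rcases eq_or_ne (b j) (a j) with h | h
    · rw [h]
    · exact Real.rpow_le_rpow (abs_nonneg _) (hab j h).le hr.le
  · exact Real.rpow_lt_rpow (abs_nonneg _) (hab i hi) hr

/-- Variational characterization of the nonnegative garrote: given an orthonormal basis
`(φ_λ)_{λ∈Λ}` of `ℝ^n`, data `Y`, thresholds `q_λ > 0`, `r ∈ (0, ∞)` and the data-dependent
weights `w_λ = q_λ² / max{q_λ, |⟨φ_λ, Y⟩|}`, the estimator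
`β̂ = Σ_λ η^JS(⟨φ_λ, Y⟩, q_λ) φ_λ` is the unique solution of:
minimize `Σ_λ |⟨φ_λ, β⟩|^r` subject to `max_λ |⟨φ_λ, Y − β⟩| / w_λ ≤ 1`. -/
theorem nonnegative_garrote_variational {n : ℕ} {Λ : Type*} [Fintype Λ]
    (φ : OrthonormalBasis Λ ℝ (EuclideanSpace ℝ (Fin n)))
    (Y : EuclideanSpace ℝ (Fin n)) (q : Λ → ℝ) (hq : ∀ l, 0 < q l)
    (r : ℝ) (hr : 0 < r)
    (w : Λ → ℝ)
    (hw : ∀ l : Λ, w l = q l ^ 2 / max (q l) |(inner ℝ (φ l) Y : ℝ)|)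
    (βhat : EuclideanSpace ℝ (Fin n))
    (hβhat : βhat = ∑ l : Λ, etaJS (inner ℝ (φ l) Y : ℝ) (q l) • φ l) :
    (∀ l : Λ, |(inner ℝ (φ l) (Y - βhat) : ℝ)| / w l ≤ 1) ∧
    ∀ β : EuclideanSpace ℝ (Fin n),
      (∀ l : Λ, |(inner ℝ (φ l) (Y - β) : ℝ)| / w l ≤ 1) → β ≠ βhat →
      (∑ l : Λ, |(inner ℝ (φ l) βhat : ℝ)| ^ r) < ∑ l : Λ, |(inner ℝ (φ l) β : ℝ)| ^ r := by
  have hcoef (l : Λ) : (inner ℝ (φ l) βhat : ℝ) = etaJS (inner ℝ (φ l) Y) (q l) := by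
    rw [hβhat]
    exact φ.orthonormal.inner_right_fintype _ l
  have hconstraint (β : EuclideanSpace ℝ (Fin n)) (l : Λ) :
      |(inner ℝ (φ l) (Y - β) : ℝ)| / w l ≤ 1 ↔
        |inner ℝ (φ l) Y - inner ℝ (φ l) β| ≤ q l ^ 2 / max (q l) |(inner ℝ (φ l) Y : ℝ)| := by
    have hwpos : 0 < w l := hw l ▸ div_pos (pow_pos (hq l) 2) ((hq l).trans_le (le_max_left _ _))
    rw [div_le_one hwpos, inner_sub_right, hw l]
  refine ⟨fun l => (hconstraint βhat l).2 (hcoef l ▸ abs_sub_etaJS_le (hq l)), fun β hβ hne => ?_⟩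
  simp only [hcoef]
  refine sum_rpow_abs_lt_of_ne hr
    (fun l hl => abs_etaJS_lt_of_ne (hq l) ((hconstraint β l).1 (hβ l)) hl) fun h => hne ?_
  rw [← φ.sum_repr' β, hβhat]
  exact Finset.sum_congr rfl fun l _ => by rw [congr_fun h l]
end

section
/- Let (φ_λ)_{λ∈Λ}, with Λ finite, be an orthonormal basis of ℝ^n, let Λ = ⋃_{a∈K} Λ_a be a partition of Λ into pairwise disjoint nonempty subsets, let Y ∈ ℝ^n and q_a > 0 for each a ∈ K. Then the block soft-thresholding estimator β̂ = Σ_{a∈K} Σ_{λ∈Λ_a} (η₁(P_a Y, q_a))_λ φ_λ is the unique solution of: minimize ‖β‖₂² over β ∈ ℝ^n subject to ‖P_a(Y − β)‖₂ ≤ q_a for every a ∈ K. -/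
/-!
By Parseval, `‖β‖² = ∑ₐ ‖Pₐ β‖²`, and both the constraints and the estimator act block by block.
On one block, with `x = Pₐ Y` and `η = η₁(x, q)`, `η` is the point of the ball `B(x, q)` closest
to the origin: every `y` in that ball has `⟪η, y - η⟫ ≥ 0`, hence `‖y‖² ≥ ‖η‖² + ‖y - η‖²`.
Summing over the blocks gives `‖β‖² ≥ ‖β̂‖² + ‖β - β̂‖²` for every feasible `β`.
-/

open scoped RealInnerProductSpace

section SoftThreshold

variable {F : Type*} [NormedAddCommGroup F] [InnerProductSpace ℝ F]

/-- The paper's `η₁(x, q)`. -/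
noncomputable def softThreshold (q : ℝ) (x : F) : F := max (1 - q / ‖x‖) 0 • x

theorem norm_sub_softThreshold_le {q : ℝ} (hq : 0 ≤ q) (x : F) :
    ‖x - softThreshold q x‖ ≤ q := by
  rcases eq_or_ne x 0 with rfl | hx
  · simpa [softThreshold] using hq
  have hR : 0 < ‖x‖ := norm_pos_iff.mpr hx
  set t := max (1 - q / ‖x‖) 0
  have h1t : 0 ≤ 1 - t := by
    simp only [t, sub_nonneg, max_le_iff, zero_le_one, and_true]
    linarith [div_nonneg hq hR.le]
  calc ‖x - softThreshold q x‖ = (1 - t) * ‖x‖ := by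
        rw [softThreshold, ← norm_smul_of_nonneg h1t, sub_smul, one_smul]
    _ ≤ q / ‖x‖ * ‖x‖ := by gcongr; linarith [le_max_left (1 - q / ‖x‖) 0]
    _ = q := div_mul_cancel₀ q hR.ne'

theorem inner_softThreshold_sub_nonneg {q : ℝ} (hq : 0 < q) {x y : F} (hxy : ‖x - y‖ ≤ q) :
    0 ≤ ⟪softThreshold q x, y - softThreshold q x⟫ := by
  set d := y - softThreshold q x
  rcases eq_or_ne x 0 with rfl | hx
  · simp [softThreshold]
  have hR : 0 < ‖x‖ := norm_pos_iff.mpr hx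
  rcases le_or_gt (1 - q / ‖x‖) 0 with ht | ht
  · simp [softThreshold, max_eq_right ht]
  have hxd : x - y = (q / ‖x‖) • x - d := by
    simp only [d, softThreshold, max_eq_left ht.le, sub_smul, one_smul]; abel
  have hnorm : ‖(q / ‖x‖) • x‖ = q := by
    rw [norm_smul_of_nonneg (by positivity), div_mul_cancel₀ q hR.ne']
  have hfeas : ‖d‖ ^ 2 ≤ 2 * (q / ‖x‖) * ⟪x, d⟫ := by
    have := pow_le_pow_left₀ (norm_nonneg _) hxy 2
    rw [hxd, norm_sub_sq_real, hnorm, real_inner_smul_left] at this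
    linarith
  have hxd_nonneg : 0 ≤ ⟪x, d⟫ :=
    nonneg_of_mul_nonneg_right (by linarith [sq_nonneg ‖d‖]) (by positivity : 0 < 2 * (q / ‖x‖))
  rw [softThreshold, real_inner_smul_left]
  exact mul_nonneg (le_max_right _ _) hxd_nonneg

theorem sq_norm_softThreshold_add_sq_norm_sub_le {q : ℝ} (hq : 0 < q) {x y : F}
    (hxy : ‖x - y‖ ≤ q) :
    ‖softThreshold q x‖ ^ 2 + ‖y - softThreshold q x‖ ^ 2 ≤ ‖y‖ ^ 2 := by
  have h := norm_add_sq_real (softThreshold q x) (y - softThreshold q x)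
  rw [add_sub_cancel] at h
  linarith [inner_softThreshold_sub_nonneg hq hxy]

end SoftThreshold

section Blocks

variable {Λ K E : Type*} [NormedAddCommGroup E] [InnerProductSpace ℝ E]

/-- With `s = Λ_a`, `blockCoeffs φ s` is the paper's `P_a`. -/
noncomputable def blockCoeffs (φ : Λ → E) (s : Finset Λ) : E →ₗ[ℝ] EuclideanSpace ℝ s :=
  (WithLp.linearEquiv 2 ℝ (s → ℝ)).symm.toLinearMap ∘ₗ
    LinearMap.pi fun l => innerₗ E (φ l)

@[simp]
theorem blockCoeffs_apply (φ : Λ → E) (s : Finset Λ) (v : E) (l : s) :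
    blockCoeffs φ s v l = ⟪φ l, v⟫ := rfl

theorem norm_blockCoeffs (φ : Λ → E) (s : Finset Λ) (v : E) :
    ‖blockCoeffs φ s v‖ = √(∑ l ∈ s, ⟪φ l, v⟫ ^ 2) := by
  simp [EuclideanSpace.norm_eq, Finset.sum_attach s fun l => ⟪φ l, v⟫ ^ 2]

theorem sq_norm_eq_sum_sq_norm_blockCoeffs [Fintype Λ] [Fintype K]
    (φ : OrthonormalBasis Λ ℝ E) {Blk : K → Finset Λ}
    (hdisj : ∀ a a' : K, a ≠ a' → Disjoint (Blk a) (Blk a'))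
    (hcover : ∀ l : Λ, ∃ a : K, l ∈ Blk a) (v : E) :
    ‖v‖ ^ 2 = ∑ a, ‖blockCoeffs φ (Blk a) v‖ ^ 2 := by
  classical
  have huniv : Finset.univ.biUnion Blk = Finset.univ :=
    Finset.eq_univ_of_forall fun l => by simpa using hcover l
  simp_rw [EuclideanSpace.real_norm_sq_eq, blockCoeffs_apply, ← φ.sum_sq_inner_right v, ← huniv]
  rw [Finset.sum_biUnion fun a _ a' _ h => hdisj a a' h]
  exact Finset.sum_congr rfl fun a _ => (Finset.sum_coe_sort (Blk a) _).symm

theorem Orthonormal.inner_right_sum_blocks [Fintype K] {φ : Λ → E} (hφ : Orthonormal ℝ φ)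
    {Blk : K → Finset Λ}
    (hdisj : ∀ a a' : K, a ≠ a' → Disjoint (Blk a) (Blk a')) (f : K → Λ → ℝ)
    {a : K} {l : Λ} (hl : l ∈ Blk a) :
    ⟪φ l, ∑ a', ∑ l' ∈ Blk a', f a' l' • φ l'⟫ = f a l := by
  classical
  rw [inner_sum, Finset.sum_eq_single a, hφ.inner_right_sum _ hl]
  · intro a' _ ha'
    have hl' : l ∉ Blk a' := Finset.disjoint_left.mp (hdisj a a' ha'.symm) hl
    refine inner_sum (𝕜 := ℝ) _ _ _ |>.trans <| Finset.sum_eq_zero fun l' hl'' => ?_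
    rw [real_inner_smul_right, hφ.inner_eq_zero (ne_of_mem_of_not_mem hl'' hl').symm, mul_zero]
  · simp

end Blocks

theorem block_soft_thresholding_variational_general {n : ℕ} {Λ K : Type*} [Fintype Λ] [Fintype K]
    (φ : OrthonormalBasis Λ ℝ (EuclideanSpace ℝ (Fin n)))
    (Blk : K → Finset Λ)
    (hdisj : ∀ a a' : K, a ≠ a' → Disjoint (Blk a) (Blk a'))
    (hcover : ∀ l : Λ, ∃ a : K, l ∈ Blk a)
    (Y : EuclideanSpace ℝ (Fin n)) (q : K → ℝ) (hq : ∀ a, 0 < q a)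
    -- `Pnorm a v = ‖P_a v‖₂`, the Euclidean norm of the block of coefficients of `v`
    (Pnorm : K → EuclideanSpace ℝ (Fin n) → ℝ)
    (hPnorm : ∀ (a : K) (v : EuclideanSpace ℝ (Fin n)),
      Pnorm a v = Real.sqrt (∑ l ∈ Blk a, (inner ℝ (φ l) v : ℝ) ^ 2))
    (βhat : EuclideanSpace ℝ (Fin n))
    (hβhat : βhat = ∑ a : K, ∑ l ∈ Blk a,
      ((inner ℝ (φ l) Y : ℝ) * max (1 - q a / Pnorm a Y) 0) • φ l) :
    (∀ a : K, Pnorm a (Y - βhat) ≤ q a) ∧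
    ∀ β : EuclideanSpace ℝ (Fin n),
      (∀ a : K, Pnorm a (Y - β) ≤ q a) → β ≠ βhat →
      ‖βhat‖ ^ 2 < ‖β‖ ^ 2 := by
  set P := fun a => blockCoeffs φ (Blk a)
  have hPnorm' : ∀ a v, Pnorm a v = ‖P a v‖ := fun a v => by rw [hPnorm, norm_blockCoeffs]
  have hβhat_block : ∀ a, P a βhat = softThreshold (q a) (P a Y) := by
    intro a
    ext l
    rw [hβhat, blockCoeffs_apply, φ.orthonormal.inner_right_sum_blocks hdisj _ l.2, softThreshold,
      hPnorm', PiLp.smul_apply, blockCoeffs_apply, smul_eq_mul, mul_comm]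
  have hparseval := sq_norm_eq_sum_sq_norm_blockCoeffs φ hdisj hcover
  refine ⟨fun a => ?_, fun β hβ hne => ?_⟩
  · rw [hPnorm', map_sub, hβhat_block]
    exact norm_sub_softThreshold_le (hq a).le _
  · have hβ_block : ∀ a, ‖P a βhat‖ ^ 2 + ‖P a (β - βhat)‖ ^ 2 ≤ ‖P a β‖ ^ 2 := fun a => by
      rw [map_sub, hβhat_block]
      refine sq_norm_softThreshold_add_sq_norm_sub_le (hq a) ?_
      rw [← map_sub, ← hPnorm']
      exact hβ a
    have hdiff : β - βhat ≠ 0 := sub_ne_zero.mpr hne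
    calc ‖βhat‖ ^ 2 < ‖βhat‖ ^ 2 + ‖β - βhat‖ ^ 2 := lt_add_of_pos_right _ (by positivity)
      _ = ∑ a, (‖P a βhat‖ ^ 2 + ‖P a (β - βhat)‖ ^ 2) := by
          rw [Finset.sum_add_distrib, hparseval, hparseval (β - βhat)]
      _ ≤ ∑ a, ‖P a β‖ ^ 2 := Finset.sum_le_sum fun a _ => hβ_block a
      _ = ‖β‖ ^ 2 := (hparseval β).symm

/-- Variational characterization of block soft-thresholding: for an orthonormal basis
`(φ_λ)_{λ∈Λ}` of `ℝ^n`, a partition `Λ = ⋃_{a∈K} Λ_a` into pairwise disjoint nonempty blocks,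
data `Y` and thresholds `q_a > 0`, the block soft-thresholding estimator
`β̂ = Σ_a Σ_{λ∈Λ_a} (η₁(P_a Y, q_a))_λ φ_λ` (with `η₁(x,q) = x·max(1 − q/‖x‖₂, 0)`)
is the unique solution of: minimize `‖β‖₂²` subject to `‖P_a(Y − β)‖₂ ≤ q_a` for all `a`. -/
theorem block_soft_thresholding_variational {n : ℕ} {Λ K : Type*} [Fintype Λ] [Fintype K]
    (φ : OrthonormalBasis Λ ℝ (EuclideanSpace ℝ (Fin n)))
    (Blk : K → Finset Λ)
    (hdisj : ∀ a a' : K, a ≠ a' → Disjoint (Blk a) (Blk a'))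
    (hne : ∀ a : K, (Blk a).Nonempty)
    (hcover : ∀ l : Λ, ∃ a : K, l ∈ Blk a)
    (Y : EuclideanSpace ℝ (Fin n)) (q : K → ℝ) (hq : ∀ a, 0 < q a)
    -- `Pnorm a v = ‖P_a v‖₂`, the Euclidean norm of the block of coefficients of `v`
    (Pnorm : K → EuclideanSpace ℝ (Fin n) → ℝ)
    (hPnorm : ∀ (a : K) (v : EuclideanSpace ℝ (Fin n)),
      Pnorm a v = Real.sqrt (∑ l ∈ Blk a, (inner ℝ (φ l) v : ℝ) ^ 2))
    (βhat : EuclideanSpace ℝ (Fin n))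
    (hβhat : βhat = ∑ a : K, ∑ l ∈ Blk a,
      ((inner ℝ (φ l) Y : ℝ) * max (1 - q a / Pnorm a Y) 0) • φ l) :
    (∀ a : K, Pnorm a (Y - βhat) ≤ q a) ∧
    ∀ β : EuclideanSpace ℝ (Fin n),
      (∀ a : K, Pnorm a (Y - β) ≤ q a) → β ≠ βhat →
      ‖βhat‖ ^ 2 < ‖β‖ ^ 2 :=
  block_soft_thresholding_variational_general φ Blk hdisj hcover Y q hq Pnorm hPnorm βhat hβhat
end
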